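/- Let L : A* ⇀ B* be a partial function. The functor Ū : Auto(L_Kl) → Auto(L_Set) reflects final objects: if 𝒜 is a Kl(T)-automaton accepting L_Kl such that Ū(𝒜) is a final object of Auto(L_Set), then 𝒜 is a final object of Auto(L_Kl). -/

import Mathlib

open CategoryTheory CategoryTheory.Limits

universe v u

/-! ### The input category `I_A` of word automata -/

inductive WObj (A : Type) : Type where
  | left | center | right

inductive WEdge {A : Type} : WObj A → WObj A → Type where
  | tri : WEdge WObj.left WObj.center
  | letter (a : A) : WEdge WObj.center WObj.center
  | tril : WEdge WObj.center WObj.right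

instance (A : Type) : Quiver (WObj A) := ⟨WEdge⟩

/-- `I_A`: the free category on the graph `left -▷→ center -a→ center -◁→ right`. -/
def IA (A : Type) : Type := Paths (WObj A)

instance (A : Type) : Category (IA A) :=
  inferInstanceAs (Category (Paths (WObj A)))

def IA.l (A : Type) : IA A := WObj.left
def IA.c (A : Type) : IA A := WObj.center
def IA.r (A : Type) : IA A := WObj.right

/-- The generating morphism `▷ : left ⟶ center`. -/
def IA.tri (A : Type) : IA.l A ⟶ IA.c A := Quiver.Hom.toPath WEdge.tri
/-- The generating morphism `a : center ⟶ center` for a letter `a`. -/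
def IA.letter {A : Type} (a : A) : IA.c A ⟶ IA.c A := Quiver.Hom.toPath (WEdge.letter a)
/-- The generating morphism `◁ : center ⟶ right`. -/
def IA.tril (A : Type) : IA.c A ⟶ IA.r A := Quiver.Hom.toPath WEdge.tril

/-- The word spelled by a path in the graph (the sequence of `letter` edges used). -/
def toWord {A : Type} : ∀ {X Y : WObj A}, Quiver.Path X Y → List A
  | _, _, Quiver.Path.nil => []
  | _, _, Quiver.Path.cons p e =>
      toWord p ++ (match e with
        | WEdge.letter a => [a]
        | _ => [])

/-- The path `center → center` spelling a word `w`. -/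
def pathCC {A : Type} : List A → ((IA.c A) ⟶ (IA.c A))
  | [] => Quiver.Path.nil
  | a :: w => (Quiver.Hom.toPath (WEdge.letter a)).comp (pathCC w)

/-- The path `▷ w ◁ : left ⟶ right` spelling a word `w`. -/
def pathLR {A : Type} (w : List A) : (IA.l A) ⟶ (IA.r A) :=
  IA.tri A ≫ pathCC w ≫ IA.tril A

theorem path_from_right {A : Type} : ∀ {Z : WObj A},
    Quiver.Path (WObj.right : WObj A) Z → Z = WObj.right
  | _, Quiver.Path.nil => rfl
  | _, Quiver.Path.cons p e => by
      have h := path_from_right p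
      subst h
      exact nomatch e

theorem path_ll_nil {A : Type} (p : Quiver.Path (WObj.left : WObj A) WObj.left) :
    p = Quiver.Path.nil := by
  cases p with
  | nil => rfl
  | cons q e => exact nomatch e

theorem path_rr_nil {A : Type} (p : Quiver.Path (WObj.right : WObj A) WObj.right) :
    p = Quiver.Path.nil := by
  cases p with
  | nil => rfl
  | cons q e =>
      have h := path_from_right q
      subst h
      exact nomatch e

theorem path_rl_false {A : Type} (p : Quiver.Path (WObj.right : WObj A) WObj.left) :
    False := by
  have := path_from_right p
  exact nomatch this

/-- `O_A`: the full subcategory of `I_A` on the objects `left` and `right`. -/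
def OA (A : Type) : Type := ObjectProperty.FullSubcategory (fun X : IA A => X ≠ IA.c A)

instance (A : Type) : Category (OA A) :=
  inferInstanceAs (Category (ObjectProperty.FullSubcategory (fun X : IA A => X ≠ IA.c A)))

/-- The inclusion functor `ι : O_A ⥤ I_A`. -/
def OA.inc (A : Type) : OA A ⥤ IA A := ObjectProperty.ι _

def OA.l (A : Type) : OA A := ⟨IA.l A, fun h => by cases h⟩
def OA.r (A : Type) : OA A := ⟨IA.r A, fun h => by cases h⟩

/-- The morphism `▷ w ◁ : left ⟶ right` of `O_A`. -/
def OA.word {A : Type} (w : List A) : OA.l A ⟶ OA.r A := ⟨pathLR w⟩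

/-- The language `O_A ⥤ C` determined by two objects `LI`, `LO` of `C` and a function
assigning to every word `w ∈ A*` a morphism `LI ⟶ LO` (the value at `▷w◁`). -/
def mkLang {A : Type} {C : Type u} [Category.{v} C] (LI LO : C)
    (f : List A → (LI ⟶ LO)) : OA A ⥤ C where
  obj X :=
    match X with
    | ⟨WObj.left, _⟩ => LI
    | ⟨WObj.right, _⟩ => LO
    | ⟨WObj.center, h⟩ => absurd rfl h
  map {X Y} p :=
    match X, Y, p with
    | ⟨WObj.left, _⟩, ⟨WObj.left, _⟩, _ => 𝟙 LI
    | ⟨WObj.left, _⟩, ⟨WObj.right, _⟩, p => f (toWord (InducedCategory.Hom.hom p))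
    | ⟨WObj.right, _⟩, ⟨WObj.right, _⟩, _ => 𝟙 LO
    | ⟨WObj.right, _⟩, ⟨WObj.left, _⟩, p => (path_rl_false (InducedCategory.Hom.hom p)).elim
    | ⟨WObj.center, h⟩, _, _ => absurd rfl h
    | _, ⟨WObj.center, h⟩, _ => absurd rfl h
  map_id X := by
    rcases X with ⟨(_|_|_), hX⟩
    · rfl
    · exact absurd rfl hX
    · rfl
  map_comp {X Y Z} p q := by
    obtain ⟨p⟩ := p
    obtain ⟨q⟩ := q
    rcases X with ⟨(_|_|_), hX⟩ <;> rcases Y with ⟨(_|_|_), hY⟩ <;>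
      rcases Z with ⟨(_|_|_), hZ⟩ <;>
      first
        | exact absurd rfl hX
        | exact absurd rfl hY
        | exact absurd rfl hZ
        | exact (path_rl_false p).elim
        | exact (path_rl_false q).elim
        | exact (Category.id_comp _).symm
        | (have hp := path_ll_nil p
           subst hp
           show f (toWord (Quiver.Path.comp Quiver.Path.nil q)) = 𝟙 LI ≫ f (toWord q)
           exact (congrArg (fun x => f (toWord x)) (Quiver.Path.nil_comp q)).trans
             (Category.id_comp _).symm)
        | (have hq := path_rr_nil q
           subst hq
           show f (toWord (Quiver.Path.comp p Quiver.Path.nil)) = f (toWord p) ≫ 𝟙 LO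
           exact (congrArg (fun x => f (toWord x)) (Quiver.Path.comp_nil p)).trans
             (Category.comp_id _).symm)

/-- A `C`-automaton `M` accepts the `C`-language `L` when `ι ⋙ M = L`. -/
def Accepts {A : Type} {C : Type u} [Category.{v} C] (M : IA A ⥤ C) (L : OA A ⥤ C) : Prop :=
  OA.inc A ⋙ M = L

/-- The category `Auto(L)` of `C`-automata accepting the language `L`; morphisms are
natural transformations whose whiskering along `ι` is the identity of `L`. -/
def Auto (A : Type) {C : Type u} [Category.{v} C] (L : OA A ⥤ C) : Type _ :=
  { M : IA A ⥤ C // Accepts M L }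

instance (A : Type) {C : Type u} [Category.{v} C] (L : OA A ⥤ C) :
    Category (Auto A L) where
  Hom M N := { α : M.1 ⟶ N.1 //
    Functor.whiskerLeft (OA.inc A) α = eqToHom (M.2.trans N.2.symm) }
  id M := ⟨𝟙 M.1, by simp⟩
  comp {M N P} f g := ⟨f.1 ≫ g.1, by
    rw [Functor.whiskerLeft_comp, f.2, g.2, eqToHom_trans]⟩
  id_comp f := Subtype.ext (Category.id_comp _)
  comp_id f := Subtype.ext (Category.comp_id _)
  assoc f g h := Subtype.ext (Category.assoc _ _ _)

/-- The functor `St : Auto(L) ⥤ C` evaluating an automaton at the object `center`. -/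
def St (A : Type) {C : Type u} [Category.{v} C] (L : OA A ⥤ C) : Auto A L ⥤ C where
  obj M := M.1.obj (IA.c A)
  map f := f.1.app (IA.c A)
  map_id _ := rfl
  map_comp _ _ := rfl

/-- The underlying natural transformation of a morphism in `Auto(L)`. -/
def Auto.nat {A : Type} {C : Type u} [Category.{v} C] {L : OA A ⥤ C} {M N : Auto A L}
    (α : M ⟶ N) : M.1 ⟶ N.1 :=
  (show { β : M.1 ⟶ N.1 //
      Functor.whiskerLeft (OA.inc A) β = eqToHom (M.2.trans N.2.symm) } from α).1

/-- Constructor for objects of `Auto(L)`. -/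
def Auto.mk {A : Type} {C : Type u} [Category.{v} C] {L : OA A ⥤ C}
    (M : IA A ⥤ C) (h : Accepts M L) : Auto A L := ⟨M, h⟩

/-! ### The transducer monad `T X = B* × X + 1` and its Kleisli category -/

/-- The monad `T X = B* × X + 1` (implemented as `Option (List B × X)`,
with `none` playing the role of `⊥ ∈ 1`). -/
def TM (B : Type) (X : Type) : Type := Option (List B × X)

namespace TM

variable {B : Type}

/-- `⊥` : the element of `1` in `T X = B* × X + 1`. -/
def bot {X : Type} : TM B X := (none : Option (List B × X))

/-- `(w, x)` as an element of `T X`. -/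
def el {X : Type} (w : List B) (x : X) : TM B X := (some (w, x) : Option (List B × X))

/-- The unit of the monad: `x ↦ (ε, x)`. -/
def unit {X : Type} (x : X) : TM B X := el [] x

/-- The bind operation of the monad, corresponding to the multiplication
`(w, (u, x)) ↦ (wu, x)`, everything else going to `⊥`. -/
def bindT {X Y : Type} (t : TM B X) (f : X → TM B Y) : TM B Y :=
  Option.bind (t : Option (List B × X)) fun p =>
    Option.map (fun q => (p.1 ++ q.1, q.2)) (f p.2 : Option (List B × Y))

instance : Monad (TM B) where
  pure := unit
  bind := bindT

instance : LawfulMonad (TM B) := by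
  apply LawfulMonad.mk' (m := TM B)
  · intro α t
    show bindT t (fun x => unit x) = t
    rcases (t : Option (List B × α)) with _ | ⟨w, x⟩
    · rfl
    · simp [bindT, unit, el] <;> rfl
  · intro α β x f
    show bindT (unit x) f = f x
    rcases hf : (f x : Option (List B × β)) with _ | ⟨u, y⟩ <;>
      simp [bindT, unit, el, hf] <;> rfl
  · intro α β γ t f g
    show bindT (bindT t f) g = bindT t fun x => bindT (f x) g
    rcases (t : Option (List B × α)) with _ | ⟨w, x⟩
    · rfl
    · rcases hf : (f x : Option (List B × β)) with _ | ⟨u, y⟩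
      · simp [bindT, hf] <;> rfl
      · rcases hg : (g y : Option (List B × γ)) with _ | ⟨v, z⟩ <;>
          simp [bindT, hf, hg] <;> rfl

end TM

/-- The Kleisli category `Kl(T)` of the monad `T X = B* × X + 1`. -/
abbrev KlT (B : Type) := CategoryTheory.KleisliCat (TM B)

/-- The projection `π₁(f) : X → B* + 1` of a Kleisli morphism `f : X ⇸ Y`. -/
def pi1 {B X Y : Type} (f : X → TM B Y) : X → Option (List B) :=
  fun x => Option.map Prod.fst (f x : Option (List B × Y))

/-- The projection `π₂(f) : X → Y + 1` of a Kleisli morphism `f : X ⇸ Y`. -/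
def pi2 {B X Y : Type} (f : X → TM B Y) : X → Option Y :=
  fun x => Option.map Prod.snd (f x : Option (List B × Y))

/-- The class `E_Kl` of Kleisli morphisms `e` with `π₂(e)` surjective onto `Y`. -/
def EKl {B : Type} {X Y : KlT B} (f : X ⟶ Y) : Prop :=
  ∀ y : Y, ∃ x : X, pi2 f x = some y

/-- The class `M_Kl` of Kleisli morphisms `m` with `π₂(m)` injective and `π₁(m)`
constantly `ε`. -/
def MKl {B : Type} {X Y : KlT B} (f : X ⟶ Y) : Prop :=
  Function.Injective (pi2 f) ∧ ∀ x : X, pi1 f x = some ([] : List B)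

/-- The `(Kl(T), 1, 1)`-language associated with a partial function `L : A* ⇀ B*`
(represented as `L : A* → Option B*`): it sends `▷w◁` to the Kleisli morphism `1 ⇸ 1`
given by `(L(w), 0)` when `L(w)` is defined and `⊥` otherwise. -/
def LKl (A B : Type) (L : List A → Option (List B)) : OA A ⥤ KlT B :=
  mkLang (CategoryTheory.KleisliCat.mk (TM B) PUnit) (CategoryTheory.KleisliCat.mk (TM B) PUnit)
    (fun w => fun _ : PUnit => ((L w).map (fun v => (v, PUnit.unit)) : TM B PUnit))

/-- The `(Set, 1, B* + 1)`-language associated with a partial function `L : A* ⇀ B*`: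
it sends `▷w◁` to the function `1 → B* + 1` picking out `L(w)` (here `B* + 1` is
represented by `T 1 = B* × 1 + 1`). -/
def LSet (A B : Type) (L : List A → Option (List B)) : OA A ⥤ Type :=
  mkLang PUnit (TM B PUnit)
    (fun w => TypeCat.ofHom (fun _ : PUnit => ((L w).map (fun v => (v, PUnit.unit)) : TM B PUnit)))

/-! ### Auxiliary infrastructure -/

section Aux

theorem no_path_to_left {A : Type} : ∀ {Z : WObj A},
    Quiver.Path Z (WObj.left : WObj A) → Z = WObj.left
  | _, Quiver.Path.nil => rfl
  | _, Quiver.Path.cons _ e => nomatch e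

theorem pathCC_snoc {A : Type} (w : List A) (a : A) :
    pathCC (w ++ [a]) = Quiver.Path.cons (pathCC w) (WEdge.letter a) := by
  induction w with
  | nil => rfl
  | cons b w ih =>
      show (Quiver.Hom.toPath (WEdge.letter b)).comp (pathCC (w ++ [a])) = _
      conv_lhs => rw [ih]
      rfl

/-- Statement of the normalization lemma for paths out of `center`. -/
def ccStmt {A : Type} : ∀ {Z : WObj A}, Quiver.Path (WObj.center : WObj A) Z → Prop
  | WObj.center, p => p = pathCC (toWord p)
  | WObj.left, _ => True
  | WObj.right, _ => True

/-- Statement of the normalization lemma for paths out of `left`. -/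
def lcStmt {A : Type} : ∀ {Z : WObj A}, Quiver.Path (WObj.left : WObj A) Z → Prop
  | WObj.center, p => p = (Quiver.Hom.toPath WEdge.tri).comp (pathCC (toWord p))
  | WObj.left, _ => True
  | WObj.right, _ => True

theorem norm_cc_aux {A : Type} {Z : WObj A} (p : Quiver.Path (WObj.center : WObj A) Z) :
    ccStmt p := by
  induction p with
  | nil =>
      show Quiver.Path.nil = pathCC (toWord (Quiver.Path.nil (a := (WObj.center : WObj A))))
      simp [toWord]
      rfl
  | cons p e ih =>
      change WEdge _ _ at e
      cases e with
      | tri => exact absurd (no_path_to_left p) (fun h => by cases h)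
      | letter a =>
          have ih' : p = pathCC (toWord p) := ih
          show Quiver.Path.cons p (WEdge.letter a) =
            pathCC (toWord (Quiver.Path.cons p (WEdge.letter a)))
          rw [show toWord (Quiver.Path.cons p (WEdge.letter a)) = toWord p ++ [a] by
            simp [toWord]]
          rw [pathCC_snoc, ← ih']
          rfl
      | tril => trivial

theorem norm_cc {A : Type} (p : Quiver.Path (WObj.center : WObj A) WObj.center) :
    p = pathCC (toWord p) := norm_cc_aux p

theorem norm_lc_aux {A : Type} {Z : WObj A} (p : Quiver.Path (WObj.left : WObj A) Z) :
    lcStmt p := by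
  induction p with
  | nil => trivial
  | cons p e ih =>
      change WEdge _ _ at e
      cases e with
      | tri =>
          have h := path_ll_nil p
          subst h
          show Quiver.Path.cons Quiver.Path.nil WEdge.tri =
            (Quiver.Hom.toPath WEdge.tri).comp
              (pathCC (toWord (Quiver.Path.cons Quiver.Path.nil WEdge.tri)))
          rw [show toWord (Quiver.Path.cons (Quiver.Path.nil (a := (WObj.left : WObj A)))
            WEdge.tri) = [] by simp [toWord]]
          rfl
      | letter a =>
          have ih' : p = (Quiver.Hom.toPath WEdge.tri).comp (pathCC (toWord p)) := ih
          show Quiver.Path.cons p (WEdge.letter a) =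
            (Quiver.Hom.toPath WEdge.tri).comp
              (pathCC (toWord (Quiver.Path.cons p (WEdge.letter a))))
          rw [show toWord (Quiver.Path.cons p (WEdge.letter a)) = toWord p ++ [a] by
            simp [toWord]]
          rw [pathCC_snoc]
          exact congrArg (fun q => Quiver.Path.cons q (WEdge.letter a)) ih'
      | tril => trivial

theorem norm_lc {A : Type} (p : Quiver.Path (WObj.left : WObj A) WObj.center) :
    p = (Quiver.Hom.toPath WEdge.tri).comp (pathCC (toWord p)) := norm_lc_aux p

theorem norm_lr {A : Type} (p : Quiver.Path (WObj.left : WObj A) WObj.right) :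
    p = pathLR (toWord p) := by
  cases p with
  | cons p e =>
      change WEdge _ _ at e
      cases e
      have ih := norm_lc p
      show Quiver.Path.cons p WEdge.tril = pathLR (toWord (Quiver.Path.cons p WEdge.tril))
      rw [show toWord (Quiver.Path.cons p WEdge.tril) = toWord p by simp [toWord]]
      show Quiver.Path.cons p WEdge.tril =
        (Quiver.Hom.toPath WEdge.tri).comp ((pathCC (toWord p)).comp
          (Quiver.Hom.toPath WEdge.tril))
      conv_lhs => rw [ih]
      rfl

theorem toWord_comp {A : Type} {X Y Z : WObj A} (p : Quiver.Path X Y) (q : Quiver.Path Y Z) :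
    toWord (p.comp q) = toWord p ++ toWord q := by
  induction q with
  | nil => simp [toWord]
  | cons q e ih =>
      show toWord (Quiver.Path.cons (p.comp q) e) = _
      change WEdge _ _ at e
      cases e <;> simp [toWord, ih]

theorem toWord_pathCC {A : Type} (w : List A) : toWord (pathCC w) = w := by
  induction w with
  | nil => exact toWord.eq_1 _
  | cons a w ih =>
      show toWord ((Quiver.Hom.toPath (WEdge.letter a)).comp (pathCC w)) = a :: w
      have h1 := toWord_comp (X := (WObj.center : WObj A)) (Y := WObj.center)
        (Z := WObj.center) (Quiver.Hom.toPath (WEdge.letter a)) (pathCC w)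
      have h3 : toWord (X := (WObj.center : WObj A)) (Y := WObj.center) (pathCC w) = w := ih
      refine h1.trans ?_
      rw [h3]
      simp [toWord, Quiver.Hom.toPath]

theorem toWord_pathLR {A : Type} (w : List A) : toWord (pathLR w) = w := by
  have h1 := toWord_comp (X := WObj.left) (Y := WObj.center) (Z := WObj.right)
    (Quiver.Hom.toPath WEdge.tri)
    (Quiver.Path.comp (b := (WObj.center : WObj A)) (pathCC w) (Quiver.Hom.toPath WEdge.tril))
  have h2 := toWord_comp (X := (WObj.center : WObj A)) (Y := WObj.center) (Z := WObj.right)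
    (pathCC w) (Quiver.Hom.toPath WEdge.tril)
  have h3 : toWord (X := (WObj.center : WObj A)) (Y := WObj.center) (pathCC w) = w :=
    toWord_pathCC w
  refine h1.trans ?_
  rw [h2, h3]
  simp [toWord, Quiver.Hom.toPath]

/-- The prefunctor on the generating graph determined by the data of an automaton. -/
def autoPre {A : Type} {C : Type u} [Category.{v} C] (Fl Fc Fr : C)
    (ti : Fl ⟶ Fc) (le : A → (Fc ⟶ Fc)) (tr : Fc ⟶ Fr) : Prefunctor (WObj A) C where
  obj X := match X with
    | WObj.left => Fl
    | WObj.center => Fc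
    | WObj.right => Fr
  map {X Y} e := match X, Y, e with
    | _, _, WEdge.tri => ti
    | _, _, WEdge.letter a => le a
    | _, _, WEdge.tril => tr

/-- The automaton (functor `I_A ⥤ C`) determined by its data. -/
def mkAuto {A : Type} {C : Type u} [Category.{v} C] (Fl Fc Fr : C)
    (ti : Fl ⟶ Fc) (le : A → (Fc ⟶ Fc)) (tr : Fc ⟶ Fr) : IA A ⥤ C :=
  Paths.lift (autoPre Fl Fc Fr ti le tr)

theorem mkAuto_map_tri {A : Type} {C : Type u} [Category.{v} C] (Fl Fc Fr : C)
    (ti : Fl ⟶ Fc) (le : A → (Fc ⟶ Fc)) (tr : Fc ⟶ Fr) :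
    (mkAuto Fl Fc Fr ti le tr).map (IA.tri A) = ti :=
  Paths.lift_toPath _ _

theorem mkAuto_map_letter {A : Type} {C : Type u} [Category.{v} C] (Fl Fc Fr : C)
    (ti : Fl ⟶ Fc) (le : A → (Fc ⟶ Fc)) (tr : Fc ⟶ Fr) (a : A) :
    (mkAuto Fl Fc Fr ti le tr).map (IA.letter a) = le a :=
  Paths.lift_toPath _ _

theorem mkAuto_map_tril {A : Type} {C : Type u} [Category.{v} C] (Fl Fc Fr : C)
    (ti : Fl ⟶ Fc) (le : A → (Fc ⟶ Fc)) (tr : Fc ⟶ Fr) :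
    (mkAuto Fl Fc Fr ti le tr).map (IA.tril A) = tr :=
  Paths.lift_toPath _ _

/-- Fold of the letter transitions over a word. -/
def foldMap {A : Type} {C : Type u} [Category.{v} C] {Fc : C}
    (le : A → (Fc ⟶ Fc)) : List A → (Fc ⟶ Fc)
  | [] => 𝟙 Fc
  | a :: w => le a ≫ foldMap le w

theorem map_pathCC {A : Type} {C : Type u} [Category.{v} C] (G : IA A ⥤ C) (w : List A) :
    G.map (pathCC w) = foldMap (fun a => G.map (IA.letter a)) w := by
  induction w with
  | nil => exact G.map_id _
  | cons a w ih =>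
      show G.map (IA.letter a ≫ pathCC w) = _
      rw [G.map_comp, ih]
      rfl

theorem map_pathLR {A : Type} {C : Type u} [Category.{v} C] (G : IA A ⥤ C) (w : List A) :
    G.map (pathLR w) = G.map (IA.tri A) ≫ G.map (pathCC w) ≫ G.map (IA.tril A) := by
  show G.map (IA.tri A ≫ pathCC w ≫ IA.tril A) = _
  rw [G.map_comp, G.map_comp]

namespace TM

variable {B : Type}

/-- Prepending `w ∈ B*` to the output component. -/
def act {X : Type} (w : List B) (t : TM B X) : TM B X :=
  Option.map (fun q => (w ++ q.1, q.2)) (t : Option (List B × X))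

theorem bindT_bot {X Y : Type} (f : X → TM B Y) : bindT (bot : TM B X) f = bot := rfl

theorem bindT_el {X Y : Type} (w : List B) (x : X) (f : X → TM B Y) :
    bindT (el w x) f = act w (f x) := rfl

theorem act_nil {X : Type} (t : TM B X) : act [] t = t := by
  rcases (t : Option (List B × X)) with _ | ⟨w, x⟩ <;> rfl

theorem bindT_unit {X Y : Type} (x : X) (f : X → TM B Y) : bindT (unit x) f = f x := by
  rw [show (unit x : TM B X) = el [] x from rfl, bindT_el, act_nil]

theorem bindT_pure {X : Type} (t : TM B X) : bindT t unit = t := by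
  rcases (t : Option (List B × X)) with _ | ⟨w, x⟩
  · rfl
  · simp [bindT, unit, el] <;> rfl

theorem bindT_assoc {X Y Z : Type} (t : TM B X) (f : X → TM B Y) (g : Y → TM B Z) :
    bindT (bindT t f) g = bindT t fun x => bindT (f x) g := by
  rcases (t : Option (List B × X)) with _ | ⟨w, x⟩
  · rfl
  · rcases hf : (f x : Option (List B × Y)) with _ | ⟨u, y⟩
    · simp [bindT, hf] <;> rfl
    · rcases hg : (g y : Option (List B × Z)) with _ | ⟨v, z⟩ <;>
        simp [bindT, hf, hg] <;> rfl

theorem bindT_unit_cast {X Y : Type} (h : X = Y) (t : TM B X) :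
    bindT t (fun z => unit (cast h z)) = cast (congrArg (TM B) h) t := by
  subst h
  exact bindT_pure t

theorem cast_bindT {X Y Z : Type} (h : Y = Z) (t : TM B X) (f : X → TM B Y) :
    cast (congrArg (TM B) h) (bindT t f) = bindT t (fun x => cast (congrArg (TM B) h) (f x)) := by
  subst h; rfl

theorem cast_unit {X Y : Type} (h : X = Y) (x : X) :
    cast (congrArg (TM B) h) (unit x) = unit (cast h x) := by
  subst h; rfl

end TM

theorem kl_comp_apply {B : Type} {X Y Z : KlT B} (f : X ⟶ Y) (g : Y ⟶ Z) (x : X) :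
    (f ≫ g) x = TM.bindT (f x) g := rfl

theorem kl_id_apply {B : Type} {X : KlT B} (x : X) : (𝟙 X : X ⟶ X) x = TM.unit x := rfl

theorem kl_eqToHom_apply {B : Type} {X Y : KlT B} (h : X = Y) (x : X) :
    (eqToHom h) x = TM.unit (cast h x) := by
  subst h; rfl

theorem type_eqToHom_apply {X Y : Type} (h : X = Y) (x : X) :
    (eqToHom h) x = cast h x := by
  subst h; rfl

theorem heq_fun_apply {α β γ δ : Type} (h1 : α = β) (h2 : γ = δ) {f : α → γ} {g : β → δ}
    (h : HEq f g) (x : α) : g (cast h1 x) = cast h2 (f x) := by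
  subst h1; subst h2; cases h; rfl

/-- Build a natural transformation between automata from components and naturality at edges. -/
def natTransOfEdges {A : Type} {C : Type u} [Category.{v} C] {F G : IA A ⥤ C}
    (app : ∀ X : WObj A, F.obj X ⟶ G.obj X)
    (nat : ∀ {X Y : WObj A} (e : WEdge X Y),
      F.map (Quiver.Hom.toPath e) ≫ app Y = app X ≫ G.map (Quiver.Hom.toPath e)) : F ⟶ G where
  app X := app X
  naturality X Y f := by
    change @Quiver.Path (WObj A) _ X Y at f
    induction f with
    | nil =>
        show F.map (𝟙 _) ≫ _ = _ ≫ G.map (𝟙 _)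
        rw [F.map_id, G.map_id, Category.id_comp, Category.comp_id]
    | @cons Y' Z' p e ih =>
        show F.map (p ≫ Quiver.Hom.toPath e) ≫ _ = _ ≫ G.map (p ≫ Quiver.Hom.toPath e)
        erw [F.map_comp, G.map_comp, Category.assoc, nat e, ← Category.assoc, ih, Category.assoc]

/-- The defining property of a morphism in `Auto(L)`. -/
theorem Auto.prop {A : Type} {C : Type u} [Category.{v} C] {L : OA A ⥤ C} {M N : Auto A L}
    (α : M ⟶ N) :
    Functor.whiskerLeft (OA.inc A) (Auto.nat α) = eqToHom (M.2.trans N.2.symm) :=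
  (show { β : M.1 ⟶ N.1 //
      Functor.whiskerLeft (OA.inc A) β = eqToHom (M.2.trans N.2.symm) } from α).2

theorem autoHom_ext {A : Type} {C : Type u} [Category.{v} C] {L : OA A ⥤ C} {M N : Auto A L}
    (α β : M ⟶ N) (h : Auto.nat α = Auto.nat β) : α = β :=
  Subtype.ext h

theorem autoHom_app_l {A : Type} {C : Type u} [Category.{v} C] {L : OA A ⥤ C} {M N : Auto A L}
    (α : M ⟶ N) : (Auto.nat α).app (WObj.left : IA A) =
      eqToHom (Functor.congr_obj (M.2.trans N.2.symm) (OA.l A)) := by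
  have h := congr_app (Auto.prop α) (OA.l A)
  rw [eqToHom_app] at h
  exact h

theorem autoHom_app_r {A : Type} {C : Type u} [Category.{v} C] {L : OA A ⥤ C} {M N : Auto A L}
    (α : M ⟶ N) : (Auto.nat α).app (WObj.right : IA A) =
      eqToHom (Functor.congr_obj (M.2.trans N.2.symm) (OA.r A)) := by
  have h := congr_app (Auto.prop α) (OA.r A)
  rw [eqToHom_app] at h
  exact h

/-- Build a morphism of `Auto(L)` from components and naturality at edges. -/
def mkAutoHom {A : Type} {C : Type u} [Category.{v} C] {L : OA A ⥤ C} {M N : Auto A L}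
    (app : ∀ X : WObj A, M.1.obj X ⟶ N.1.obj X)
    (nat : ∀ {X Y : WObj A} (e : WEdge X Y),
      M.1.map (Quiver.Hom.toPath e) ≫ app Y = app X ≫ N.1.map (Quiver.Hom.toPath e))
    (hl : app WObj.left = eqToHom (Functor.congr_obj (M.2.trans N.2.symm) (OA.l A)))
    (hr : app WObj.right = eqToHom (Functor.congr_obj (M.2.trans N.2.symm) (OA.r A))) :
    M ⟶ N :=
  ⟨natTransOfEdges app nat, by
    apply NatTrans.ext
    funext X
    rcases X with ⟨(_ | _ | _), hX⟩
    · exact hl.trans (eqToHom_app _ _).symm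
    · exact absurd rfl hX
    · exact hr.trans (eqToHom_app _ _).symm⟩

theorem mkAutoHom_nat {A : Type} {C : Type u} [Category.{v} C] {L : OA A ⥤ C} {M N : Auto A L}
    (app : ∀ X : WObj A, M.1.obj X ⟶ N.1.obj X) (nat) (hl) (hr) :
    Auto.nat (mkAutoHom (M := M) (N := N) app nat hl hr) = natTransOfEdges app nat := rfl

theorem conj_id {C : Type u} [Category.{v} C] {X Y : C} (h1 : X = X) (h2 : Y = Y)
    {f g : X ⟶ Y} (hfg : f = g) : f = eqToHom h1 ≫ g ≫ eqToHom h2 := by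
  have e1 : h1 = rfl := rfl
  have e2 : h2 = rfl := rfl
  rw [e1, e2, eqToHom_refl, eqToHom_refl, Category.id_comp, Category.comp_id]
  exact hfg

theorem accepts_obj_l {A : Type} {C : Type u} [Category.{v} C] {LI LO : C}
    {f : List A → (LI ⟶ LO)} {M : IA A ⥤ C} (h : Accepts M (mkLang LI LO f)) :
    M.obj (WObj.left : IA A) = LI :=
  Functor.congr_obj h (OA.l A)

theorem accepts_obj_r {A : Type} {C : Type u} [Category.{v} C] {LI LO : C}
    {f : List A → (LI ⟶ LO)} {M : IA A ⥤ C} (h : Accepts M (mkLang LI LO f)) :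
    M.obj (WObj.right : IA A) = LO :=
  Functor.congr_obj h (OA.r A)

theorem accepts_map {A : Type} {C : Type u} [Category.{v} C] {LI LO : C}
    {f : List A → (LI ⟶ LO)} {M : IA A ⥤ C} (h : Accepts M (mkLang LI LO f)) (w : List A) :
    M.map (pathLR w) = eqToHom (accepts_obj_l h) ≫ f w ≫ eqToHom (accepts_obj_r h).symm := by
  have h2 := Functor.congr_hom h (OA.word w)
  rw [show (mkLang LI LO f).map (OA.word w) = f (toWord (pathLR w)) from rfl,
    toWord_pathLR] at h2
  exact h2

theorem accepts_mkAuto {A : Type} {C : Type u} [Category.{v} C] {LI LO : C} (Fc : C)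
    (ti : LI ⟶ Fc) (le : A → (Fc ⟶ Fc)) (tr : Fc ⟶ LO) (f : List A → (LI ⟶ LO))
    (hw : ∀ w, ti ≫ foldMap le w ≫ tr = f w) :
    Accepts (mkAuto LI Fc LO ti le tr) (mkLang LI LO f) := by
  show OA.inc A ⋙ mkAuto LI Fc LO ti le tr = mkLang LI LO f
  fapply CategoryTheory.Functor.ext
  · rintro ⟨(_ | _ | _), hX⟩
    · rfl
    · exact absurd rfl hX
    · rfl
  · rintro ⟨(_ | _ | _), hX⟩ ⟨(_ | _ | _), hY⟩ ⟨pa⟩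
    · have hp := path_ll_nil pa
      subst hp
      exact conj_id _ _ rfl
    · exact absurd rfl hY
    · -- left to right
      rw [norm_lr pa]
      refine conj_id _ _ ?_
      generalize toWord pa = w
      show (mkAuto LI Fc LO ti le tr).map (pathLR w) = f (toWord (pathLR w))
      rw [toWord_pathLR, map_pathLR, map_pathCC, mkAuto_map_tri, mkAuto_map_tril,
        show (fun a => (mkAuto LI Fc LO ti le tr).map (IA.letter a)) = le from
          funext (fun a => mkAuto_map_letter _ _ _ _ _ _ _)]
      exact hw w
    · exact absurd rfl hX
    · exact absurd rfl hX
    · exact absurd rfl hX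
    · exact (path_rl_false pa).elim
    · exact absurd rfl hY
    · have hp := path_rr_nil pa
      subst hp
      exact conj_id _ _ rfl

section KleisliAux

variable {A B : Type}

/-- Iterated Kleisli composition of letter transitions. -/
def klFold {S : Type} (d : A → (S → TM B S)) : List A → S → TM B S
  | [] => TM.unit
  | a :: w => fun x => TM.bindT (d a x) (klFold d w)

theorem map_pathCC_kl (M : IA A ⥤ KlT B) (w : List A) :
    M.map (pathCC w) = klFold (fun a => M.map (IA.letter a)) w := by
  induction w with
  | nil => exact M.map_id _
  | cons a w ih =>
      show M.map (IA.letter a ≫ pathCC w) = _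
      rw [M.map_comp, ih]
      rfl

/-- Fold of Kleisli letter transitions over a word, as repeated `bindT` in `Set`. -/
theorem fold_bind {S : Type} (d : A → (S → TM B S)) (w : List A) (t : TM B S) :
    foldMap (C := Type) (Fc := TM B S) (fun a => TypeCat.ofHom fun t => TM.bindT t (d a)) w t
      = TM.bindT t (klFold d w) := by
  induction w generalizing t with
  | nil => exact (TM.bindT_pure t).symm
  | cons a w ih =>
      show foldMap (C := Type) (Fc := TM B S) (fun a => TypeCat.ofHom fun t => TM.bindT t (d a)) w
          (TM.bindT t (d a)) = _
      rw [ih, TM.bindT_assoc]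
      rfl

theorem foldW_bind {S : Type} (d : A → (S → TM B S)) (w : List A) (s : TM B (TM B S)) :
    foldMap (C := Type) (Fc := TM B (TM B S))
        (fun a => TypeCat.ofHom fun s => TM.bindT s (fun t => TM.unit (TM.bindT t (d a)))) w s
      = TM.bindT s (fun t => TM.unit (TM.bindT t (klFold d w))) := by
  induction w generalizing s with
  | nil =>
      show s = _
      have h : ∀ t : TM B S, TM.bindT t (klFold d []) = t := fun t => TM.bindT_pure t
      simp only [h]
      exact (TM.bindT_pure s).symm
  | cons a w ih =>
      show foldMap (C := Type) (Fc := TM B (TM B S))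
          (fun a => TypeCat.ofHom fun s => TM.bindT s (fun t => TM.unit (TM.bindT t (d a)))) w
          (TM.bindT s (fun t => TM.unit (TM.bindT t (d a)))) = _
      rw [ih, TM.bindT_assoc]
      simp only [TM.bindT_unit, TM.bindT_assoc]
      rfl

end KleisliAux

section UbarDef

variable {A B : Type} {L : List A → Option (List B)}

/-- The state object of an automaton. -/
@[reducible] def stObj (M : Auto A (LKl A B L)) : Type := M.1.obj (IA.c A)

theorem objL (M : Auto A (LKl A B L)) : M.1.obj (WObj.left : IA A) = PUnit :=
  Functor.congr_obj M.2 (OA.l A)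

theorem objR (M : Auto A (LKl A B L)) : M.1.obj (WObj.right : IA A) = PUnit :=
  Functor.congr_obj M.2 (OA.r A)

/-- The initial map of `Ū M`, i.e. the adjoint transpose of `M(▷)`. -/
def autoI (M : Auto A (LKl A B L)) : PUnit → TM B (stObj M) :=
  fun _ => M.1.map (IA.tri A) (cast (objL M).symm PUnit.unit)

/-- The letter transitions of `M`, as Kleisli maps. -/
def autoD (M : Auto A (LKl A B L)) (a : A) : stObj M → TM B (stObj M) :=
  M.1.map (IA.letter a)

/-- The final map of `M`, transported to land in `T 1`. -/
def autoF (M : Auto A (LKl A B L)) : stObj M → TM B PUnit :=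
  fun x => cast (congrArg (TM B) (objR M)) (M.1.map (IA.tril A) x)

/-- The underlying functor of `Ū M`. -/
def UbarF (M : Auto A (LKl A B L)) : IA A ⥤ Type :=
  mkAuto PUnit (TM B (stObj M)) (TM B PUnit)
    (TypeCat.ofHom (autoI M)) (fun a => TypeCat.ofHom fun t => TM.bindT t (autoD M a))
    (TypeCat.ofHom fun t => TM.bindT t (autoF M))

/-- Evaluation of a triple Kleisli composite with `eqToHom`s on both sides. -/
theorem kl_three_apply {B : Type} {X Y Z W : KlT B} (h1 : X = Y) (g : Y ⟶ Z) (h2 : Z = W)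
    (x : X) : (eqToHom h1 ≫ g ≫ eqToHom h2) x = TM.bindT (g (cast h1 x)) (eqToHom h2) := by
  subst h1
  have e : (eqToHom (rfl : X = X) ≫ g ≫ eqToHom h2) x
      = TM.bindT (TM.unit x) (g ≫ eqToHom h2) := rfl
  exact e.trans (TM.bindT_unit _ _)

/-- The crucial computation: the value of `M` on `▷w◁`, in transported form. -/
theorem auto_word (M : Auto A (LKl A B L)) (w : List A) :
    TM.bindT (TM.bindT (autoI M PUnit.unit) (klFold (autoD M) w)) (autoF M)
      = Option.map (fun v => (v, PUnit.unit)) (L w) := by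
  have hLw : (LKl A B L).map (OA.word w)
      = (fun _ : PUnit => (Option.map (fun v => (v, PUnit.unit)) (L w) : TM B PUnit)) := by
    rw [show (LKl A B L).map (OA.word w) = (fun _ : PUnit =>
      (Option.map (fun v => (v, PUnit.unit)) (L (toWord (pathLR w))) : TM B PUnit)) from rfl,
      toWord_pathLR]
  have hM2 : M.1.map (pathLR w) = eqToHom (objL M) ≫ (LKl A B L).map (OA.word w)
      ≫ eqToHom (Functor.congr_obj M.2.symm (OA.r A)) := Functor.congr_hom M.2 (OA.word w)
  rw [map_pathLR, map_pathCC_kl, hLw] at hM2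
  have h2 := congr_fun hM2 (cast (objL M).symm PUnit.unit)
  have h3 : TM.bindT (TM.bindT (autoI M PUnit.unit) (klFold (autoD M) w))
        (M.1.map (IA.tril A))
      = TM.bindT (Option.map (fun v => (v, PUnit.unit)) (L w))
          (eqToHom (Functor.congr_obj M.2.symm (OA.r A))) :=
    (TM.bindT_assoc _ _ _).trans (h2.trans (kl_three_apply _ _ _ _))
  calc TM.bindT (TM.bindT (autoI M PUnit.unit) (klFold (autoD M) w)) (autoF M)
      = cast (congrArg (TM B) (objR M)) (TM.bindT
          (TM.bindT (autoI M PUnit.unit) (klFold (autoD M) w)) (M.1.map (IA.tril A))) := by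
        rw [TM.cast_bindT (objR M)]
        rfl
    _ = cast (congrArg (TM B) (objR M)) (TM.bindT
          (Option.map (fun v => (v, PUnit.unit)) (L w))
          (eqToHom (Functor.congr_obj M.2.symm (OA.r A)))) :=
        congrArg (cast (congrArg (TM B) (objR M))) h3
    _ = (id (Option.map (fun v => (v, PUnit.unit)) (L w)) : TM B PUnit) := by
        erw [TM.cast_bindT (objR M)]
        have h5 : ∀ z : PUnit, cast (congrArg (TM B) (objR M))
            ((eqToHom (Functor.congr_obj M.2.symm (OA.r A))) z) = TM.unit z := by
          intro z
          erw [kl_eqToHom_apply, TM.cast_unit (objR M), cast_cast]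
        simp only [h5]
        exact TM.bindT_pure _

/-- `Ū M` accepts `L_Set`. -/
theorem UbarF_accepts (M : Auto A (LKl A B L)) : Accepts (UbarF M) (LSet A B L) := by
  apply accepts_mkAuto
  intro w
  refine ConcreteCategory.hom_ext _ _ (fun u => ?_)
  cases u
  show TM.bindT (foldMap (C := Type) (Fc := TM B (stObj M))
      (fun a => TypeCat.ofHom fun t => TM.bindT t (autoD M a)) w (autoI M (PUnit.unit : PUnit.{1}))) (autoF M)
    = Option.map (fun v => (v, PUnit.unit)) (L w)
  rw [fold_bind]
  exact auto_word M w

/-- The automaton `Ū M`, an object of `Auto(L_Set)`. -/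
def Ubar (M : Auto A (LKl A B L)) : Auto A (LSet A B L) :=
  ⟨UbarF M, UbarF_accepts M⟩

/-- The underlying functor of `Ū (F̄ (Ū M))` (the "double" automaton). -/
def UFUF (M : Auto A (LKl A B L)) : IA A ⥤ Type :=
  mkAuto PUnit (TM B (TM B (stObj M))) (TM B PUnit)
    (TypeCat.ofHom fun u => TM.unit (autoI M u))
    (fun a => TypeCat.ofHom fun s => TM.bindT s (fun t => TM.unit (TM.bindT t (autoD M a))))
    (TypeCat.ofHom fun s => TM.bindT s (fun t => TM.bindT t (autoF M)))

theorem UFUF_accepts (M : Auto A (LKl A B L)) : Accepts (UFUF M) (LSet A B L) := by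
  apply accepts_mkAuto
  intro w
  refine ConcreteCategory.hom_ext _ _ (fun u => ?_)
  cases u
  show TM.bindT (foldMap (C := Type) (Fc := TM B (TM B (stObj M)))
      (fun a => TypeCat.ofHom fun s => TM.bindT s (fun t => TM.unit (TM.bindT t (autoD M a)))) w
      (TM.unit (autoI M (PUnit.unit : PUnit.{1})))) (fun t => TM.bindT t (autoF M))
    = Option.map (fun v => (v, PUnit.unit)) (L w)
  rw [foldW_bind, TM.bindT_unit, TM.bindT_unit]
  exact auto_word M w

/-- `Ū (F̄ (Ū M))` as an object of `Auto(L_Set)`. -/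
def UbarW (M : Auto A (LKl A B L)) : Auto A (LSet A B L) :=
  ⟨UFUF M, UFUF_accepts M⟩

/-- Naturality of a `Ubar`-morphism at `▷`. -/
theorem gnat_tri (M p : Auto A (LKl A B L)) (g : Ubar M ⟶ Ubar p) (u : PUnit.{1}) :
    (Auto.nat g).app (WObj.center : IA A) (autoI M u) = autoI p u := by
  have h : (Auto.nat g).app (WObj.center : IA A) (autoI M u)
      = autoI p ((Auto.nat g).app (WObj.left : IA A) u) :=
    types_congr_hom ((Auto.nat g).naturality (Quiver.Hom.toPath WEdge.tri)) u
  rw [h, autoHom_app_l g]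
  rfl

/-- Naturality of a `Ubar`-morphism at a letter. -/
theorem gnat_letter (M p : Auto A (LKl A B L)) (g : Ubar M ⟶ Ubar p) (a : A)
    (t : TM B (stObj M)) :
    (Auto.nat g).app (WObj.center : IA A) (TM.bindT t (autoD M a))
      = TM.bindT ((Auto.nat g).app (WObj.center : IA A) t) (autoD p a) :=
  types_congr_hom ((Auto.nat g).naturality (Quiver.Hom.toPath (WEdge.letter a))) t

/-- Naturality of a `Ubar`-morphism at `◁`. -/
theorem gnat_tril (M p : Auto A (LKl A B L)) (g : Ubar M ⟶ Ubar p) (t : TM B (stObj M)) :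
    TM.bindT t (autoF M)
      = TM.bindT ((Auto.nat g).app (WObj.center : IA A) t) (autoF p) := by
  have h := types_congr_hom ((Auto.nat g).naturality (Quiver.Hom.toPath WEdge.tril)) t
  rw [autoHom_app_r g] at h
  exact h

/-- The morphism `g ∘ Ū(ε_M) : Ū F̄ Ū M ⟶ Ū p`. -/
def m1 (M p : Auto A (LKl A B L)) (g : Ubar M ⟶ Ubar p) : UbarW M ⟶ Ubar p :=
  mkAutoHom
    (fun X => match X with
      | WObj.left => TypeCat.ofHom fun u => u
      | WObj.center => TypeCat.ofHom fun s =>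
          (Auto.nat g).app (WObj.center : IA A) (TM.bindT s (fun t => t))
      | WObj.right => TypeCat.ofHom fun t => t)
    (by
      intro X Y e
      cases e with
      | tri =>
          refine ConcreteCategory.hom_ext _ _ (fun u => ?_)
          show (Auto.nat g).app (WObj.center : IA A)
              (TM.bindT (TM.unit (autoI M u)) (fun t => t)) = autoI p u
          rw [TM.bindT_unit]
          exact gnat_tri M p g u
      | letter a =>
          refine ConcreteCategory.hom_ext _ _ (fun s => ?_)
          show (Auto.nat g).app (WObj.center : IA A)
              (TM.bindT (TM.bindT s (fun t => TM.unit (TM.bindT t (autoD M a))))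
                (fun t => t))
            = TM.bindT ((Auto.nat g).app (WObj.center : IA A)
                (TM.bindT s (fun t => t))) (autoD p a)
          erw [TM.bindT_assoc]
          simp only [TM.bindT_unit]
          rw [show TM.bindT s (fun x => TM.bindT x (autoD M a))
            = TM.bindT (TM.bindT s (fun t => t)) (autoD M a) from
              (TM.bindT_assoc s (fun t => t) (autoD M a)).symm]
          exact gnat_letter M p g a _
      | tril =>
          refine ConcreteCategory.hom_ext _ _ (fun s => ?_)
          show TM.bindT s (fun t => TM.bindT t (autoF M))
            = TM.bindT ((Auto.nat g).app (WObj.center : IA A)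
                (TM.bindT s (fun t => t))) (autoF p)
          rw [show TM.bindT s (fun t => TM.bindT t (autoF M))
            = TM.bindT (TM.bindT s (fun t => t)) (autoF M) from
              (TM.bindT_assoc s (fun t => t) (autoF M)).symm]
          exact gnat_tril M p g _)
    rfl rfl

/-- The morphism `Ū(ε_p) ∘ Ū F̄ (g) : Ū F̄ Ū M ⟶ Ū p`. -/
def m2 (M p : Auto A (LKl A B L)) (g : Ubar M ⟶ Ubar p) : UbarW M ⟶ Ubar p :=
  mkAutoHom
    (fun X => match X with
      | WObj.left => TypeCat.ofHom fun u => u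
      | WObj.center => TypeCat.ofHom fun s => TM.bindT s ((Auto.nat g).app (WObj.center : IA A))
      | WObj.right => TypeCat.ofHom fun t => t)
    (by
      intro X Y e
      cases e with
      | tri =>
          refine ConcreteCategory.hom_ext _ _ (fun u => ?_)
          show TM.bindT (TM.unit (autoI M u)) ((Auto.nat g).app (WObj.center : IA A))
            = autoI p u
          erw [TM.bindT_unit]
          exact gnat_tri M p g u
      | letter a =>
          refine ConcreteCategory.hom_ext _ _ (fun s => ?_)
          show TM.bindT (TM.bindT s (fun t => TM.unit (TM.bindT t (autoD M a))))
              ((Auto.nat g).app (WObj.center : IA A))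
            = TM.bindT (TM.bindT s ((Auto.nat g).app (WObj.center : IA A))) (autoD p a)
          erw [TM.bindT_assoc, TM.bindT_assoc]
          exact congrArg (TM.bindT s)
            (funext fun x => (TM.bindT_unit _ _).trans (gnat_letter M p g a x))
      | tril =>
          refine ConcreteCategory.hom_ext _ _ (fun s => ?_)
          show TM.bindT s (fun t => TM.bindT t (autoF M))
            = TM.bindT (TM.bindT s ((Auto.nat g).app (WObj.center : IA A))) (autoF p)
          erw [TM.bindT_assoc]
          simp only [← gnat_tril M p g])
    rfl rfl

/-- The key lemma: the center component of any `Ubar`-morphism is a `T`-algebra map,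
i.e. it is determined by its restriction along the unit. -/
theorem g_key (M p : Auto A (LKl A B L)) (hT : IsTerminal (Ubar p))
    (g : Ubar M ⟶ Ubar p) (t : TM B (stObj M)) :
    (Auto.nat g).app (WObj.center : IA A) t
      = TM.bindT t (fun x => (Auto.nat g).app (WObj.center : IA A) (TM.unit x)) := by
  have hm := hT.hom_ext (m1 M p g) (m2 M p g)
  have hc := types_congr_hom (congr_arg
    (fun (h : UbarW M ⟶ Ubar p) => (Auto.nat h).app (WObj.center : IA A)) hm)
  rcases (t : Option (List B × stObj M)) with _ | ⟨w, x⟩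
  · exact hc TM.bot
  · have h2 : (Auto.nat g).app (WObj.center : IA A) (TM.el (w ++ []) x)
        = TM.act w ((Auto.nat g).app (WObj.center : IA A) (TM.unit x)) :=
      hc (TM.el w (TM.unit x))
    rw [List.append_nil] at h2
    exact h2

/-- the morphism `M ⟶ p` induced by a `Ubar`-morphism, when `Ū p` is terminal. -/
def homMP (M p : Auto A (LKl A B L)) (hT : IsTerminal (Ubar p)) : M ⟶ p :=
  mkAutoHom
    (fun X => match X with
      | WObj.left => eqToHom ((objL M).trans (objL p).symm)
      | WObj.center => fun x =>
          (Auto.nat (hT.from (Ubar M))).app (WObj.center : IA A) (TM.unit x)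
      | WObj.right => eqToHom ((objR M).trans (objR p).symm))
    (by
      set g := hT.from (Ubar M) with hg
      intro X Y e
      cases e with
      | tri =>
          funext y
          show TM.bindT (M.1.map (IA.tri A) y)
              (fun x => (Auto.nat g).app (WObj.center : IA A) (TM.unit x))
            = TM.bindT ((eqToHom ((objL M).trans (objL p).symm)) y) (p.1.map (IA.tri A))
          rw [← g_key M p hT g (M.1.map (IA.tri A) y)]
          have e1 : autoI M (cast (objL M) y) = M.1.map (IA.tri A) y := by
            show M.1.map (IA.tri A) (cast (objL M).symm (cast (objL M) y))
              = M.1.map (IA.tri A) y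
            exact congrArg (M.1.map (IA.tri A)) ((cast_cast _ _ _).trans (cast_eq _ _))
          rw [← e1, gnat_tri M p g]
          erw [kl_eqToHom_apply ((objL M).trans (objL p).symm) y, TM.bindT_unit]
          show p.1.map (IA.tri A) (cast (objL p).symm (cast (objL M) y)) = _
          exact congrArg (p.1.map (IA.tri A)) (cast_cast _ _ _)
      | letter a =>
          funext x
          show TM.bindT (autoD M a x)
              (fun x => (Auto.nat g).app (WObj.center : IA A) (TM.unit x))
            = TM.bindT ((Auto.nat g).app (WObj.center : IA A) (TM.unit x)) (autoD p a)
          erw [← g_key M p hT g (autoD M a x),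
            show autoD M a x = TM.bindT (TM.unit x) (autoD M a) from
              (TM.bindT_unit x (autoD M a)).symm,
            gnat_letter M p g a]
          rfl
      | tril =>
          funext x
          show TM.bindT (M.1.map (IA.tril A) x)
              (eqToHom ((objR M).trans (objR p).symm))
            = TM.bindT ((Auto.nat g).app (WObj.center : IA A) (TM.unit x))
                (p.1.map (IA.tril A))
          have e0 : (eqToHom ((objR M).trans (objR p).symm) :
              (M.1.obj (WObj.right : IA A) : KlT B) ⟶ (p.1.obj (WObj.right : IA A) : KlT B))
              = fun z => TM.unit (cast ((objR M).trans (objR p).symm) z) :=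
            funext (fun z => kl_eqToHom_apply ((objR M).trans (objR p).symm) z)
          have s1 : TM.bindT (M.1.map (IA.tril A) x)
              (eqToHom ((objR M).trans (objR p).symm))
              = cast (congrArg (TM B) ((objR M).trans (objR p).symm))
                  (M.1.map (IA.tril A) x) := by
            rw [e0]
            exact TM.bindT_unit_cast ((objR M).trans (objR p).symm) (M.1.map (IA.tril A) x)
          have e2 : autoF M x = TM.bindT
              ((Auto.nat g).app (WObj.center : IA A) (TM.unit x)) (autoF p) := by
            rw [← TM.bindT_unit x (autoF M)]
            exact gnat_tril M p g (TM.unit x)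
          have e3 : TM.bindT ((Auto.nat g).app (WObj.center : IA A) (TM.unit x)) (autoF p)
              = cast (congrArg (TM B) (objR p))
                  (TM.bindT ((Auto.nat g).app (WObj.center : IA A) (TM.unit x))
                    (p.1.map (IA.tril A))) :=
            (TM.cast_bindT (objR p) _ _).symm
          have s4 := congrArg (cast (congrArg (TM B) (objR p)).symm) (e2.trans e3)
          have s6 : cast (congrArg (TM B) (objR p)).symm
              (cast (congrArg (TM B) (objR p))
                (TM.bindT ((Auto.nat g).app (WObj.center : IA A) (TM.unit x))
                  (p.1.map (IA.tril A))))
              = TM.bindT ((Auto.nat g).app (WObj.center : IA A) (TM.unit x))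
                  (p.1.map (IA.tril A)) := by
            rw [cast_cast]
            exact cast_eq _ _
          have s5 : TM.bindT ((Auto.nat g).app (WObj.center : IA A) (TM.unit x))
              (p.1.map (IA.tril A))
              = cast (congrArg (TM B) (objR p)).symm
                  (cast (congrArg (TM B) (objR M)) (M.1.map (IA.tril A) x)) :=
            (s4.trans s6).symm
          have s7 : cast (congrArg (TM B) (objR p)).symm
              (cast (congrArg (TM B) (objR M)) (M.1.map (IA.tril A) x))
              = cast (congrArg (TM B) ((objR M).trans (objR p).symm))
                  (M.1.map (IA.tril A) x) := by
            rw [cast_cast]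
          exact s1.trans ((s5.trans s7).symm))
    rfl rfl

/-- Lifting a morphism `M ⟶ p` of Kleisli automata to a `Ubar`-morphism. -/
def liftHom (M p : Auto A (LKl A B L)) (α : M ⟶ p) : Ubar M ⟶ Ubar p :=
  mkAutoHom
    (fun X => match X with
      | WObj.left => TypeCat.ofHom fun u => u
      | WObj.center => TypeCat.ofHom fun t => TM.bindT t ((Auto.nat α).app (WObj.center : IA A))
      | WObj.right => TypeCat.ofHom fun t => t)
    (by
      intro X Y e
      cases e with
      | tri =>
          refine ConcreteCategory.hom_ext _ _ (fun u => ?_)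
          show TM.bindT (autoI M u) ((Auto.nat α).app (WObj.center : IA A)) = autoI p u
          have h : TM.bindT (M.1.map (IA.tri A) (cast (objL M).symm u))
              ((Auto.nat α).app (WObj.center : IA A))
              = TM.bindT ((Auto.nat α).app (WObj.left : IA A) (cast (objL M).symm u))
                  (p.1.map (IA.tri A)) :=
            congr_fun ((Auto.nat α).naturality (Quiver.Hom.toPath WEdge.tri))
              (cast (objL M).symm u)
          rw [autoHom_app_l α] at h
          refine h.trans ?_
          have h2 : (eqToHom (Functor.congr_obj (M.2.trans p.2.symm) (OA.l A)) :
              (M.1.obj (WObj.left : IA A) : KlT B) ⟶ (p.1.obj (WObj.left : IA A) : KlT B))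
              (cast (objL M).symm u)
              = TM.unit (cast ((objL M).trans (objL p).symm) (cast (objL M).symm u)) :=
            kl_eqToHom_apply _ _
          erw [h2, TM.bindT_unit]
          show p.1.map (IA.tri A) _ = p.1.map (IA.tri A) (cast (objL p).symm u)
          exact congrArg (p.1.map (IA.tri A)) (cast_cast _ _ _)
      | letter a =>
          refine ConcreteCategory.hom_ext _ _ (fun t => ?_)
          show TM.bindT (TM.bindT t (autoD M a)) ((Auto.nat α).app (WObj.center : IA A))
            = TM.bindT (TM.bindT t ((Auto.nat α).app (WObj.center : IA A))) (autoD p a)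
          erw [TM.bindT_assoc, TM.bindT_assoc]
          have h : ∀ x, TM.bindT (autoD M a x) ((Auto.nat α).app (WObj.center : IA A))
              = TM.bindT ((Auto.nat α).app (WObj.center : IA A) x) (autoD p a) :=
            fun x => congr_fun
              ((Auto.nat α).naturality (Quiver.Hom.toPath (WEdge.letter a))) x
          simp only [h]
          rfl
      | tril =>
          refine ConcreteCategory.hom_ext _ _ (fun t => ?_)
          show TM.bindT t (autoF M)
            = TM.bindT (TM.bindT t ((Auto.nat α).app (WObj.center : IA A))) (autoF p)
          erw [TM.bindT_assoc]
          have h : ∀ x, autoF M x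
              = TM.bindT ((Auto.nat α).app (WObj.center : IA A) x) (autoF p) := by
            intro x
            have h1 : TM.bindT (M.1.map (IA.tril A) x) ((Auto.nat α).app (WObj.right : IA A))
                = TM.bindT ((Auto.nat α).app (WObj.center : IA A) x) (p.1.map (IA.tril A)) :=
              congr_fun ((Auto.nat α).naturality (Quiver.Hom.toPath WEdge.tril)) x
            rw [autoHom_app_r α] at h1
            have e0 : (eqToHom (Functor.congr_obj (M.2.trans p.2.symm) (OA.r A)) :
                (M.1.obj (WObj.right : IA A) : KlT B) ⟶ (p.1.obj (WObj.right : IA A) : KlT B))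
                = fun z => TM.unit (cast ((objR M).trans (objR p).symm) z) :=
              funext (fun z => kl_eqToHom_apply _ z)
            erw [e0] at h1
            have h1' : cast (congrArg (TM B) ((objR M).trans (objR p).symm))
                (M.1.map (IA.tril A) x)
                = TM.bindT ((Auto.nat α).app (WObj.center : IA A) x) (p.1.map (IA.tril A)) :=
              (TM.bindT_unit_cast ((objR M).trans (objR p).symm)
                (M.1.map (IA.tril A) x)).symm.trans h1
            have h3 : TM.bindT ((Auto.nat α).app (WObj.center : IA A) x) (autoF p)
                = cast (congrArg (TM B) (objR p))
                    (TM.bindT ((Auto.nat α).app (WObj.center : IA A) x)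
                      (p.1.map (IA.tril A))) := (TM.cast_bindT (objR p) _ _).symm
            show cast (congrArg (TM B) (objR M)) (M.1.map (IA.tril A) x) = _
            erw [h3, ← h1', cast_cast]
          rw [show (autoF M : stObj M → TM B PUnit)
            = fun x => TM.bindT ((Auto.nat α).app (WObj.center : IA A) x) (autoF p) from
              funext h]
          rfl)
    rfl rfl

/-- Uniqueness of morphisms into `p`. -/
theorem hom_unique (M p : Auto A (LKl A B L)) (hT : IsTerminal (Ubar p))
    (α β : M ⟶ p) : α = β := by
  have hαβ := hT.hom_ext (liftHom M p α) (liftHom M p β)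
  have hc := types_congr_hom (congr_arg
    (fun (h : Ubar M ⟶ Ubar p) => (Auto.nat h).app (WObj.center : IA A)) hαβ)
  have hcomp : (Auto.nat α).app (WObj.center : IA A)
      = (Auto.nat β).app (WObj.center : IA A) := by
    funext x
    have h2 : TM.bindT (TM.unit x) ((Auto.nat α).app (WObj.center : IA A))
        = TM.bindT (TM.unit x) ((Auto.nat β).app (WObj.center : IA A)) := hc (TM.unit x)
    erw [TM.bindT_unit, TM.bindT_unit] at h2
    exact h2
  apply autoHom_ext
  apply NatTrans.ext
  funext X
  rcases X with (_ | _ | _)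
  · rw [show ((WObj.left : WObj A) : IA A) = (WObj.left : IA A) from rfl,
      autoHom_app_l α, autoHom_app_l β]
  · exact hcomp
  · rw [show ((WObj.right : WObj A) : IA A) = (WObj.right : IA A) from rfl,
      autoHom_app_r α, autoHom_app_r β]

end UbarDef

theorem type_conj {α β γ δ : Type} (h1 : α = γ) (h2 : β = δ) (f : α ⟶ β) (g : γ ⟶ δ)
    (h : ∀ y : α, g (cast h1 y) = cast h2 (f y)) :
    f = eqToHom h1 ≫ g ≫ eqToHom h2.symm := by
  subst h1; subst h2
  refine ConcreteCategory.hom_ext _ _ (fun y => ?_)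
  exact (h y).symm

end Aux

/-- The lifted functor `Ū : Auto(L_Kl) ⥤ Auto(L_Set)` reflects final objects: if `q = Ū(p)`
is the `Set`-automaton with state object `T(p(center))` obtained by applying `U_T` to the
transitions `p(a)` and `p(◁)` of a `Kl(T)`-automaton `p`, and whose initial map is the
adjoint transpose of `p(▷)` along `F_T ⊣ U_T`, then finality of `q` in `Auto(L_Set)`
implies finality of `p` in `Auto(L_Kl)`. -/
theorem Ubar_reflects_final_objects (A B : Type) (L : List A → Option (List B))
    (p : Auto A (LKl A B L)) (q : Auto A (LSet A B L))
    (hC : q.1.obj (IA.c A) = TM B (p.1.obj (IA.c A)))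
    (hTri : HEq (⇑(TypeCat.Hom.hom (q.1.map (IA.tri A)))) (p.1.map (IA.tri A)))
    (hLet : ∀ a : A, HEq (⇑(TypeCat.Hom.hom (q.1.map (IA.letter a))))
      (fun t : TM B (p.1.obj (IA.c A)) => TM.bindT t (p.1.map (IA.letter a))))
    (hTril : HEq (⇑(TypeCat.Hom.hom (q.1.map (IA.tril A))))
      (fun t : TM B (p.1.obj (IA.c A)) => TM.bindT t (p.1.map (IA.tril A))))
    (hq : IsTerminal q) :
    Nonempty (IsTerminal p) := by
  have hmap : q.1 = UbarF p := by
    fapply Paths.ext_functor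
    · funext X
      rcases X with (_ | _ | _)
      · exact accepts_obj_l q.2
      · exact hC
      · exact accepts_obj_r q.2
    · intro a b e
      change WEdge _ _ at e
      cases e with
      | tri =>
          exact type_conj (accepts_obj_l q.2) hC
            (q.1.map (Quiver.Hom.toPath WEdge.tri)) (TypeCat.ofHom (autoI p)) (fun y => by
              show p.1.map (IA.tri A)
                (cast (objL p).symm (cast (accepts_obj_l q.2) y)) = _
              exact (congrArg (p.1.map (IA.tri A)) (cast_cast _ _ _)).trans
                (heq_fun_apply ((accepts_obj_l q.2).trans (objL p).symm) hC hTri y))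
      | letter a =>
          exact type_conj hC hC (q.1.map (Quiver.Hom.toPath (WEdge.letter a)))
            (TypeCat.ofHom fun t => TM.bindT t (autoD p a))
            (fun t => heq_fun_apply hC hC (hLet a) t)
      | tril =>
          refine type_conj hC (accepts_obj_r q.2) (q.1.map (Quiver.Hom.toPath WEdge.tril))
            (TypeCat.ofHom fun t => TM.bindT t (autoF p)) ?_
          intro t
          have h1 : TM.bindT (cast hC t) (p.1.map (IA.tril A))
              = cast ((accepts_obj_r q.2).trans (congrArg (TM B) (objR p)).symm)
                  (q.1.map (Quiver.Hom.toPath WEdge.tril) t) :=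
            heq_fun_apply hC _ hTril t
          calc TM.bindT (cast hC t) (autoF p)
              = cast (congrArg (TM B) (objR p))
                  (TM.bindT (cast hC t) (p.1.map (IA.tril A))) :=
                (TM.cast_bindT (objR p) _ _).symm
            _ = cast (congrArg (TM B) (objR p))
                  (cast ((accepts_obj_r q.2).trans (congrArg (TM B) (objR p)).symm)
                    (q.1.map (Quiver.Hom.toPath WEdge.tril) t)) :=
                congrArg (cast (congrArg (TM B) (objR p))) h1
            _ = cast (accepts_obj_r q.2) (q.1.map (Quiver.Hom.toPath WEdge.tril) t) := by
                rw [cast_cast]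
  have hq2 : q = Ubar p := Subtype.ext hmap
  subst hq2
  exact ⟨IsTerminal.ofUniqueHom (fun M => homMP M p hq)
    (fun M m => hom_unique M p hq m (homMP M p hq))⟩
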